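/- Coercivity of the free energy below the critical mass: if ‖u‖_{L^1} = M < M_*, then F(u) ≥ (C_* c_{d,s}/2)(M_*^{2s/d} − M^{2s/d}) ‖u‖_{L^m}^m, and in particular F(u) ≥ 0 and any bound F(u) ≤ F(u₀) yields a uniform bound on ‖u‖_{L^m}^m. -/

import Mathlib

open MeasureTheory

noncomputable section

/-- The Riesz interaction energy `ω(u) = ∬ u(x)u(y)|x-y|^{2s-d} dx dy`. -/
def rieszEnergy (d : ℕ) (s : ℝ) (u : EuclideanSpace ℝ (Fin d) → ℝ) : ℝ :=
  ∫ x : EuclideanSpace ℝ (Fin d), ∫ y : EuclideanSpace ℝ (Fin d),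
    u x * u y * ‖x - y‖ ^ (2 * s - d) ∂volume ∂volume

/-- The free energy `F(u) = (1/(m-1)) ∫ u^m - (c/2) ω(u)`. -/
def freeEnergy (d : ℕ) (s m c : ℝ) (u : EuclideanSpace ℝ (Fin d) → ℝ) : ℝ :=
  (1 / (m - 1)) * (∫ x : EuclideanSpace ℝ (Fin d), u x ^ m ∂volume)
    - (c / 2) * rieszEnergy d s u

lemma freeEnergy_ge_of_rieszEnergy_le {d : ℕ} {s m c C M p : ℝ}
    {u : EuclideanSpace ℝ (Fin d) → ℝ} (hc : 0 ≤ c)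
    (hω : rieszEnergy d s u ≤ C * M ^ p * ∫ x, u x ^ m) :
    (1 / (m - 1) - C * c / 2 * M ^ p) * ∫ x, u x ^ m ≤ freeEnergy d s m c u := by
  have hcω := mul_le_mul_of_nonneg_left hω (by positivity : (0 : ℝ) ≤ c / 2)
  unfold freeEnergy
  linarith

lemma one_div_sub_one_eq_critical_mass_rpow {d : ℕ} {s m C c : ℝ} (hd : d ≠ 0) (hs : s ≠ 0)
    (hm : 0 < m - 1) (hC : 0 < C) (hc : 0 < c) :
    1 / (m - 1) = C * c / 2 * ((2 / ((m - 1) * C * c)) ^ ((d : ℝ) / (2 * s))) ^ (2 * s / d) := by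
  have hp : 2 * s / d ≠ 0 := by positivity
  rw [← inv_div (2 * s), Real.rpow_inv_rpow (by positivity) hp]
  field_simp

theorem freeEnergy_coercive_below_critical_mass_general
    (d : ℕ) (s : ℝ) (hs1 : 1 < 2 * s) (hs2 : 2 * s < d)
    (m : ℝ) (hm : m = 2 - 2 * s / d)
    (c : ℝ)
    (hcpos : 0 < c)
    (Cstar : ℝ) (hCpos : 0 < Cstar)
    -- `Cstar` satisfies the variant HLS inequality
    (hvhls : ∀ v : EuclideanSpace ℝ (Fin d) → ℝ, (∀ x, 0 ≤ v x) →
      Integrable v volume → MemLp v (ENNReal.ofReal m) volume →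
      rieszEnergy d s v ≤ Cstar * (∫ x : EuclideanSpace ℝ (Fin d), v x ∂volume) ^ (2 * s / d)
        * ∫ x : EuclideanSpace ℝ (Fin d), v x ^ m ∂volume)
    (Mstar : ℝ) (hMstar : Mstar = (2 / ((m - 1) * Cstar * c)) ^ ((d : ℝ) / (2 * s)))
    (u : EuclideanSpace ℝ (Fin d) → ℝ)
    (hu0 : ∀ x, 0 ≤ u x)
    (hu1 : Integrable u volume)
    (hum : MemLp u (ENNReal.ofReal m) volume)
    (M : ℝ) (hM : (∫ x : EuclideanSpace ℝ (Fin d), u x ∂volume) = M)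
    (hMlt : M < Mstar) :
    freeEnergy d s m c u
        ≥ (Cstar * c / 2) * (Mstar ^ (2 * s / d) - M ^ (2 * s / d))
            * ∫ x : EuclideanSpace ℝ (Fin d), u x ^ m ∂volume
    ∧ 0 ≤ freeEnergy d s m c u
    ∧ ∀ F₀ : ℝ, freeEnergy d s m c u ≤ F₀ →
        (∫ x : EuclideanSpace ℝ (Fin d), u x ^ m ∂volume)
          ≤ F₀ / ((Cstar * c / 2) * (Mstar ^ (2 * s / d) - M ^ (2 * s / d))) := by
  have hs : 0 < s := by linarith
  have hd : (0 : ℝ) < d := by linarith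
  have hp : 0 < 2 * s / d := by positivity
  have hm1 : 0 < m - 1 := by
    have : 2 * s / d < 1 := (div_lt_one hd).2 hs2
    linarith
  have hMnn : 0 ≤ M := hM ▸ integral_nonneg hu0
  have hK : 0 < (Cstar * c / 2) * (Mstar ^ (2 * s / d) - M ^ (2 * s / d)) :=
    mul_pos (by positivity) (sub_pos.2 (Real.rpow_lt_rpow hMnn hMlt hp))
  have hcoercive := freeEnergy_ge_of_rieszEnergy_le hcpos.le (hM ▸ hvhls u hu0 hu1 hum)
  rw [one_div_sub_one_eq_critical_mass_rpow (Nat.cast_pos.1 hd).ne' hs.ne' hm1 hCpos hcpos,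
    ← hMstar, ← mul_sub] at hcoercive
  have hX : 0 ≤ ∫ x, u x ^ m := integral_nonneg fun x => Real.rpow_nonneg (hu0 x) m
  exact ⟨hcoercive, (mul_nonneg hK.le hX).trans hcoercive,
    fun F₀ hF₀ => (le_div_iff₀' hK).2 (hcoercive.trans hF₀)⟩

/-- coercivity of the free energy below the critical mass: if
`‖u‖_{L¹} = M < M_*` then `F(u) ≥ (C_* c_{d,s}/2)(M_*^{2s/d} - M^{2s/d}) ‖u‖_{L^m}^m ≥ 0`,
and any upper bound `F(u) ≤ F₀` yields a uniform bound on `‖u‖_{L^m}^m`. -/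
theorem freeEnergy_coercive_below_critical_mass
    (d : ℕ) (hd : 3 ≤ d) (s : ℝ) (hs1 : 1 < 2 * s) (hs2 : 2 * s < d)
    (m : ℝ) (hm : m = 2 - 2 * s / d)
    (c : ℝ) (hc : c = Real.Gamma ((d : ℝ) / 2 - s) /
      (Real.pi ^ ((d : ℝ) / 2) * 4 ^ s * Real.Gamma s))
    (hcpos : 0 < c)
    (Cstar : ℝ) (hCpos : 0 < Cstar)
    -- `Cstar` satisfies the variant HLS inequality
    (hvhls : ∀ v : EuclideanSpace ℝ (Fin d) → ℝ, (∀ x, 0 ≤ v x) →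
      Integrable v volume → MemLp v (ENNReal.ofReal m) volume →
      rieszEnergy d s v ≤ Cstar * (∫ x : EuclideanSpace ℝ (Fin d), v x ∂volume) ^ (2 * s / d)
        * ∫ x : EuclideanSpace ℝ (Fin d), v x ^ m ∂volume)
    (Mstar : ℝ) (hMstar : Mstar = (2 / ((m - 1) * Cstar * c)) ^ ((d : ℝ) / (2 * s)))
    (u : EuclideanSpace ℝ (Fin d) → ℝ)
    (hu0 : ∀ x, 0 ≤ u x)
    (hu1 : Integrable u volume)
    (hum : MemLp u (ENNReal.ofReal m) volume)
    (M : ℝ) (hM : (∫ x : EuclideanSpace ℝ (Fin d), u x ∂volume) = M)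
    (hMlt : M < Mstar) :
    freeEnergy d s m c u
        ≥ (Cstar * c / 2) * (Mstar ^ (2 * s / d) - M ^ (2 * s / d))
            * ∫ x : EuclideanSpace ℝ (Fin d), u x ^ m ∂volume
    ∧ 0 ≤ freeEnergy d s m c u
    ∧ ∀ F₀ : ℝ, freeEnergy d s m c u ≤ F₀ →
        (∫ x : EuclideanSpace ℝ (Fin d), u x ^ m ∂volume)
          ≤ F₀ / ((Cstar * c / 2) * (Mstar ^ (2 * s / d) - M ^ (2 * s / d))) :=
  freeEnergy_coercive_below_critical_mass_general d s hs1 hs2 m hm c hcpos Cstar hCpos hvhls Mstar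
    hMstar u hu0 hu1 hum M hM hMlt
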